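/- arXiv:1805.05933 — 2 statements merged into one kernel-verified Lean document; each statement's English description precedes it below -/
import Mathlib

section
/- Suppose an internal set A ⊆ *ℕ has the enhanced IM property on an infinite hyperfinite interval I, and A ∩ I = B₁ ∪ ⋯ ∪ Bₙ with each Bᵢ internal. Then there exist an index i and an infinite hyperfinite subinterval J ⊆ I such that Bᵢ has the enhanced IM property on J. -/
open Filter Set MeasureTheory

/-- The hypernatural numbers: the ultrapower of `ℕ` by the hyperfilter. -/
abbrev SN : Type := Filter.Germ (Filter.hyperfilter ℕ : Filter ℕ) ℕ

/-- Membership of a hypernatural in the internal set determined by a sequence of sets. -/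
def memF (F : ℕ → Set ℕ) (x : SN) : Prop :=
  x.liftOn (fun f => ∀ᶠ i in (Filter.hyperfilter ℕ : Filter ℕ), f i ∈ F i)
    (by
      intro f g h
      exact propext (eventually_congr (h.mono fun i hi => by rw [hi])))

/-- A set of hypernaturals is internal if it is determined by a sequence of subsets of `ℕ`. -/
def InternalSet (A : Set SN) : Prop := ∃ F : ℕ → Set ℕ, A = {x | memF F x}

/-- The nonstandard extension `*A ⊆ *ℕ` of a set `A ⊆ ℕ`. -/
def starN (A : Set ℕ) : Set SN := {x | memF (fun _ => A) x}

/-- The canonical map from the hypernaturals to the hyperreals. -/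
noncomputable def toR (x : SN) : Hyperreal := Filter.Germ.map (fun n : ℕ => (n : ℝ)) x

/-- `[y,z]` is an infinite (hyperfinite) interval. -/
def InfInterval (y z : SN) : Prop := ∀ n : ℕ, y + (n : SN) < z

/-- The map `st_I : I → [0,1]`, `st_I(a) = st((a-y)/(z-y))`. -/
noncomputable def stI (y z : SN) (x : SN) : ℝ :=
  Hyperreal.st ((toR x - toR y) / (toR z - toR y))

/-- `λ_I(A)`: Lebesgue measure of the standard part image of `A ∩ I`, `I = [y,z]`. -/
noncomputable def lam (A : Set SN) (y z : SN) : ℝ :=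
  (volume (stI y z '' (A ∩ Set.Icc y z))).toReal

/-- `g_A(I)`: the normalized length of the largest gap of `A` on `I = [y,z]`. -/
noncomputable def gap (A : Set SN) (y z : SN) : ℝ :=
  sSup {r : ℝ | 0 ≤ r ∧ ∃ c d : SN, c ∈ Set.Icc y z ∧ d ∈ Set.Icc y z ∧ c ≤ d ∧
    Set.Icc c d ∩ A = ∅ ∧ (r : Hyperreal) ≤ (toR d - toR c) / (toR z - toR y)}

/-- `A` has the interval-measure (IM) property on `I = [y,z]`. -/
def IMOn (A : Set SN) (y z : SN) : Prop :=
  ∀ ε : ℝ, 0 < ε → ∃ δ : ℝ, 0 < δ ∧ ∀ c d : SN, y ≤ c → c ≤ d → d ≤ z →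
    InfInterval c d → gap A c d ≤ δ → 1 - ε ≤ lam A c d

/-- `A` has the enhanced IM property on `I = [y,z]`. -/
def EnhancedIMOn (A : Set SN) (y z : SN) : Prop := IMOn A y z ∧ 0 < lam A y z

/-- `A ⊆ ℕ` has the standard interval-measure (SIM) property. -/
def SIM (A : Set ℕ) : Prop :=
  (∀ y z : SN, InfInterval y z → IMOn (starN A) y z) ∧
  ∃ y z : SN, InfInterval y z ∧ EnhancedIMOn (starN A) y z

/-- `A ⊆ ℕ` is supra-SIM if it contains a SIM set. -/
def SupraSIM (A : Set ℕ) : Prop := ∃ B ⊆ A, SIM B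

/-!
Purify the colours one at a time, keeping an infinite subinterval on which `A` has positive measure
and the colours treated so far are absent. For the next colour `B` there are two cases. If on every
infinite subinterval the standard-part image of `A` is covered by that of `B` up to a null set, then
`B` inherits the IM property from `A` (its gaps are longer, its measure is at least as large), and
it is enhanced. Otherwise some subinterval has `st(A) \ st(B)` of positive outer measure. Since `B`
is internal, `st(B)` is closed by countable saturation, so a standard interval `[α, β]` disjoint
from `st(B)` still meets `st(A)` in positive measure; its preimage is a hyperfinite subinterval on
which `B` is absent and `A` keeps positive measure. If no colour were ever enhanced, after the last
one `A` itself would be absent from an interval where it has positive measure.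
-/

open Hyperreal ArchimedeanClass

lemma toR_le_toR {a b : SN} : toR a ≤ toR b ↔ a ≤ b :=
  Germ.inductionOn₂ a b fun f g => by
    rw [Germ.coe_le]
    exact ofSeq_le_ofSeq.trans (by simp [Filter.EventuallyLE])

lemma toR_lt_toR {a b : SN} : toR a < toR b ↔ a < b :=
  Germ.inductionOn₂ a b fun f g => by
    rw [Germ.coe_lt]
    exact ofSeq_lt_ofSeq.trans (by simp)

lemma toR_add_natCast (c : SN) (n : ℕ) : toR (c + n) = toR c + n :=
  Germ.inductionOn c fun f => by
    show ofSeq _ = ofSeq _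
    congr 1; funext i; simp

lemma infInterval_iff {c d : SN} : InfInterval c d ↔ ∀ r : ℝ, (r : ℝ*) < toR d - toR c := by
  have hcast (n : ℕ) : ((n : ℝ) : ℝ*) = n := map_natCast coeRingHom n
  have key : InfInterval c d ↔ ∀ n : ℕ, ((n : ℝ) : ℝ*) < toR d - toR c := by
    simp only [InfInterval, ← toR_lt_toR, toR_add_natCast, hcast, lt_sub_iff_add_lt']
  refine key.trans ⟨fun h r => ?_, fun h n => h n⟩
  obtain ⟨n, hn⟩ := exists_nat_gt r
  exact (coe_lt_coe.2 hn).trans (h n)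

lemma InfInterval.lt {c d : SN} (h : InfInterval c d) : c < d := by
  simpa using h 0

noncomputable def relPos (c d x : SN) : ℝ* := (toR x - toR c) / (toR d - toR c)

-- `stI` is phrased with the deprecated `Hyperreal.st`; from here on only `stdPart` is used.
set_option linter.deprecated false in
lemma stI_eq_stdPart (c d x : SN) : stI c d x = stdPart (relPos c d x) := st_eq _

lemma relPos_mem_Icc {c d x : SN} (hx : x ∈ Icc c d) : relPos c d x ∈ Icc (0 : ℝ*) 1 := by
  have hcx := toR_le_toR.2 hx.1
  have hxd := toR_le_toR.2 hx.2
  have hlen : 0 ≤ toR d - toR c := sub_nonneg.2 (hcx.trans hxd)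
  exact ⟨div_nonneg (sub_nonneg.2 hcx) hlen, div_le_one_of_le₀ (sub_le_sub_right hxd _) hlen⟩

lemma mk_relPos_nonneg {c d x : SN} (hx : x ∈ Icc c d) : 0 ≤ mk (relPos c d x) :=
  mk_nonneg_of_le_of_le_of_archimedean coeRingHom (r := 0) (s := 1)
    (by simpa using (relPos_mem_Icc hx).1) (by simpa using (relPos_mem_Icc hx).2)

lemma stI_mem_Icc {c d x : SN} (hx : x ∈ Icc c d) : stI c d x ∈ Icc (0 : ℝ) 1 := by
  rw [stI_eq_stdPart]
  exact ⟨stdPart_nonneg (relPos_mem_Icc hx).1,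
    stdPart_le_of_le coeRingHom (mk_relPos_nonneg hx) (by simpa using (relPos_mem_Icc hx).2)⟩

lemma stI_image_subset_Icc (D : Set SN) (c d : SN) : stI c d '' (D ∩ Icc c d) ⊆ Icc 0 1 := by
  rintro _ ⟨x, ⟨-, hx⟩, rfl⟩
  exact stI_mem_Icc hx

lemma volume_stI_image_ne_top (D : Set SN) (c d : SN) :
    volume (stI c d '' (D ∩ Icc c d)) ≠ ⊤ :=
  ne_top_of_le_ne_top (by simp) (measure_mono (stI_image_subset_Icc D c d))

lemma lam_pos_iff {D : Set SN} {c d : SN} :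
    0 < lam D c d ↔ volume (stI c d '' (D ∩ Icc c d)) ≠ 0 := by
  rw [lam, ENNReal.toReal_pos_iff, pos_iff_ne_zero,
    and_iff_left (volume_stI_image_ne_top D c d).lt_top]

lemma lam_le_lam_of_volume_diff_eq_zero {A B : Set SN} {c d : SN}
    (h : volume (stI c d '' (A ∩ Icc c d) \ stI c d '' (B ∩ Icc c d)) = 0) :
    lam A c d ≤ lam B c d :=
  ENNReal.toReal_mono (volume_stI_image_ne_top B c d) (measure_mono_ae (ae_le_set.2 h))

lemma gap_le_gap_of_subset {A B : Set SN} (hBA : B ⊆ A) (c d : SN) : gap A c d ≤ gap B c d := by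
  refine Real.sSup_le (fun r ⟨hr, a, b, ha, hb, hab, hA, hle⟩ =>
    le_csSup ⟨1, ?_⟩ ⟨hr, a, b, ha, hb, hab, ?_, hle⟩) (Real.sSup_nonneg fun r hr => hr.1)
  · rintro s ⟨-, a, b, ha, hb, hab, -, hle⟩
    have hab' : toR b - toR a ≤ toR d - toR c :=
      sub_le_sub (toR_le_toR.2 hb.2) (toR_le_toR.2 ha.1)
    have hlen : 0 ≤ toR d - toR c := sub_nonneg.2 (toR_le_toR.2 (ha.1.trans ha.2))
    exact_mod_cast hle.trans (div_le_one_of_le₀ hab' hlen)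
  · exact eq_empty_of_subset_empty (hA ▸ inter_subset_inter_right _ hBA)

lemma IMOn.mono {A : Set SN} {y z u v : SN} (h : IMOn A y z) (hyu : y ≤ u) (hvz : v ≤ z) :
    IMOn A u v := fun e he =>
  let ⟨δ, hδ, H⟩ := h e he
  ⟨δ, hδ, fun c d huc hcd hdv => H c d (hyu.trans huc) hcd (hdv.trans hvz)⟩

lemma IMOn.of_subset {A B : Set SN} {u v : SN} (h : IMOn A u v) (hBA : B ⊆ A)
    (hlam : ∀ p q, u ≤ p → q ≤ v → InfInterval p q → lam A p q ≤ lam B p q) : IMOn B u v :=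
  fun e he =>
  let ⟨δ, hδ, H⟩ := h e he
  ⟨δ, hδ, fun c d huc hcd hdv hinf hgap =>
    (H c d huc hcd hdv hinf ((gap_le_gap_of_subset hBA c d).trans hgap)).trans
      (hlam c d huc hdv hinf)⟩

lemma stdPart_eq_of_forall_abs_sub_lt {x : ℝ*} {t : ℝ} (h : ∀ δ : ℝ, 0 < δ → |x - t| < δ) :
    stdPart x = t := by
  refine stdPart_eq coeRingHom (fun s hs => ?_) (fun s hs => ?_)
  · have := (abs_sub_lt_iff.1 (h (t - s) (sub_pos.2 hs))).2
    change (s : ℝ*) ≤ x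
    rw [coe_sub] at this
    linarith
  · have := (abs_sub_lt_iff.1 (h (s - t) (sub_pos.2 hs))).1
    change x ≤ (s : ℝ*)
    rw [coe_sub] at this
    linarith

lemma abs_sub_stdPart_lt {x : ℝ*} (hx : 0 ≤ mk x) {δ : ℝ} (hδ : 0 < δ) :
    |x - stdPart x| < δ := by
  have h₁ : ((stdPart x - δ : ℝ) : ℝ*) < x := lt_of_lt_stdPart coeRingHom hx (by linarith)
  have h₂ : x < ((stdPart x + δ : ℝ) : ℝ*) := lt_of_stdPart_lt coeRingHom hx (by linarith)
  rw [coe_sub] at h₁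
  rw [coe_add] at h₂
  exact abs_sub_lt_iff.2 ⟨by linarith, by linarith⟩

lemma coe_lt_mul_of_forall_coe_lt {L : ℝ*} (hL : ∀ r : ℝ, (r : ℝ*) < L) {e : ℝ} (he : 0 < e)
    (r : ℝ) : (r : ℝ*) < e * L := by
  have h := mul_lt_mul_of_pos_left (hL (r / e)) (coe_pos.2 he)
  rwa [← coe_mul, mul_div_cancel₀ r he.ne'] at h

lemma stdPart_div_eq_of_abs_sub_mul_le {w L : ℝ*} (hL : ∀ r : ℝ, (r : ℝ*) < L) {t K : ℝ}
    (h : |w - t * L| ≤ K) : stdPart (w / L) = t := by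
  have hL0 : 0 < L := by simpa using hL 0
  refine stdPart_eq_of_forall_abs_sub_lt fun δ hδ => ?_
  rw [show w / L - t = (w - t * L) / L by field_simp, abs_div, abs_of_pos hL0,
    div_lt_iff₀ hL0]
  exact h.trans_lt (coe_lt_mul_of_forall_coe_lt hL hδ K)

lemma exists_mem_Icc_stI_eq {p q : SN} (hpq : InfInterval p q) {t : ℝ}
    (ht : t ∈ Icc (0 : ℝ) 1) : ∃ x ∈ Icc p q, stI p q x = t := by
  induction p using Germ.inductionOn with | h f => ?_
  induction q using Germ.inductionOn with | h g => ?_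
  set L : ℕ → ℝ := fun i => (g i : ℝ) - f i
  have hfloor : ∀ᶠ i in hyperfilter ℕ,
      (⌊t * L i⌋₊ : ℝ) ≤ t * L i ∧ t * L i - 1 < ⌊t * L i⌋₊ ∧ t * L i ≤ L i := by
    filter_upwards [Germ.coe_le.1 hpq.lt.le] with i hi
    have hL : 0 ≤ L i := sub_nonneg.2 (Nat.cast_le.2 hi)
    exact ⟨Nat.floor_le (mul_nonneg ht.1 hL), Nat.sub_one_lt_floor _,
      mul_le_of_le_one_left hL ht.2⟩
  refine ⟨↑fun i => f i + ⌊t * L i⌋₊,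
    ⟨Germ.coe_le.2 (Eventually.of_forall fun i => Nat.le_add_right _ _), Germ.coe_le.2 ?_⟩, ?_⟩
  · filter_upwards [hfloor] with i hi
    have : (f i : ℝ) + ⌊t * L i⌋₊ ≤ g i := by linarith [hi.1, hi.2.2]
    exact_mod_cast this
  · rw [stI_eq_stdPart, relPos]
    refine stdPart_div_eq_of_abs_sub_mul_le (infInterval_iff.1 hpq) (K := 1) ?_
    change ofSeq (fun i => |(((f i + ⌊t * L i⌋₊ : ℕ) : ℝ) - f i) - t * L i|) ≤ ofSeq fun _ => 1
    rw [ofSeq_le_ofSeq]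
    filter_upwards [hfloor] with i hi
    push_cast
    rw [abs_le]
    constructor <;> linarith [hi.1, hi.2.1]

lemma relPos_le_relPos {p q a b : SN} (hpq : p ≤ q) (hab : a ≤ b) : relPos p q a ≤ relPos p q b :=
  div_le_div_of_nonneg_right (sub_le_sub_right (toR_le_toR.2 hab) _)
    (sub_nonneg.2 (toR_le_toR.2 hpq))

lemma stI_monotoneOn (p q : SN) : MonotoneOn (stI p q) (Icc p q) := fun a ha b hb hab => by
  simp only [stI_eq_stdPart]
  exact stdPart_monotoneOn (mk_relPos_nonneg ha) (mk_relPos_nonneg hb)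
    (relPos_le_relPos (ha.1.trans ha.2) hab)

lemma mem_Icc_of_stI_mem_Ioo {p q a b x : SN} (ha : a ∈ Icc p q) (hb : b ∈ Icc p q)
    (hx : x ∈ Icc p q) (h : stI p q x ∈ Ioo (stI p q a) (stI p q b)) : x ∈ Icc a b :=
  ⟨((stI_monotoneOn p q).reflect_lt ha hx h.1).le, ((stI_monotoneOn p q).reflect_lt hx hb h.2).le⟩

lemma infInterval_of_stI_lt {p q a b : SN} (hpq : InfInterval p q) (ha : a ∈ Icc p q)
    (hb : b ∈ Icc p q) (h : stI p q a < stI p q b) : InfInterval a b := by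
  set δ := (stI p q b - stI p q a) / 4 with hδ_def
  have hδ : 0 < δ := by positivity
  have h₁ := abs_sub_lt_iff.1 (abs_sub_stdPart_lt (mk_relPos_nonneg ha) hδ)
  have h₂ := abs_sub_lt_iff.1 (abs_sub_stdPart_lt (mk_relPos_nonneg hb) hδ)
  rw [← stI_eq_stdPart] at h₁ h₂
  have hba : ((stI p q b : ℝ) : ℝ*) = stI p q a + 4 * δ := by
    rw [hδ_def]; push_cast; ring
  have hdiff : ((2 * δ : ℝ) : ℝ*) ≤ relPos p q b - relPos p q a := by
    push_cast; linarith [h₁.1, h₂.2]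
  have hL := infInterval_iff.1 hpq
  have hL0 : 0 < toR q - toR p := by simpa using hL 0
  refine infInterval_iff.2 fun r => ?_
  calc (r : ℝ*) < ((2 * δ : ℝ) : ℝ*) * (toR q - toR p) :=
        coe_lt_mul_of_forall_coe_lt hL (by positivity) r
    _ ≤ (relPos p q b - relPos p q a) * (toR q - toR p) :=
        mul_le_mul_of_nonneg_right hdiff hL0.le
    _ = toR b - toR a := by simp only [relPos]; field_simp; ring

lemma stI_eq_add_mul_stI {p q a b x : SN} (hpq : p < q) (ha : a ∈ Icc p q)
    (hb : b ∈ Icc p q) (hab : a < b) (hx : x ∈ Icc a b) :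
    stI p q x = stI p q a + (stI p q b - stI p q a) * stI a b x := by
  have hL : toR q - toR p ≠ 0 := sub_ne_zero.2 (toR_lt_toR.2 hpq).ne'
  have hL' : toR b - toR a ≠ 0 := sub_ne_zero.2 (toR_lt_toR.2 hab).ne'
  have hrel : relPos p q x = relPos p q a + (relPos p q b - relPos p q a) * relPos a b x := by
    simp only [relPos]; field_simp; ring
  have hmka := mk_relPos_nonneg ha
  have hmkb := mk_relPos_nonneg hb
  have hmkx := mk_relPos_nonneg hx
  have hmkba : 0 ≤ mk (relPos p q b - relPos p q a) :=
    (le_min hmkb hmka).trans (min_le_mk_sub _ _)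
  simp only [stI_eq_stdPart, hrel]
  rw [stdPart_add hmka (by rw [mk_mul]; exact add_nonneg hmkba hmkx), stdPart_mul hmkba hmkx,
    stdPart_sub hmkb hmka]

/-- Countable saturation. At index `i`, pick a point of the deepest nonempty `S m i`, `m ≤ i`. -/
lemma exists_forall_eventually_mem {α : Type*} [Nonempty α] {l : Filter ℕ} (hl : l ≤ cofinite)
    {S : ℕ → ℕ → Set α} (hS : ∀ i, Antitone fun m => S m i)
    (hne : ∀ m, ∀ᶠ i in l, (S m i).Nonempty) : ∃ x : ℕ → α, ∀ m, ∀ᶠ i in l, x i ∈ S m i := by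
  classical
  let N i := Nat.findGreatest (fun m => (S m i).Nonempty) i
  refine ⟨fun i => if h : (S (N i) i).Nonempty then h.some else Classical.arbitrary α,
    fun m => ?_⟩
  have hmi : ∀ᶠ i in l, m ≤ i :=
    hl (by simpa [Nat.cofinite_eq_atTop] using eventually_ge_atTop m)
  filter_upwards [hne m, hmi] with i hSm hmi
  have hN : (S (N i) i).Nonempty := Nat.findGreatest_spec (P := fun m => (S m i).Nonempty) hmi hSm
  simp only [hN, dif_pos]
  exact hS i (Nat.le_findGreatest hmi hSm) hN.some_mem

lemma isClosed_stI_image {D : Set SN} (hD : InternalSet D) (c d : SN) :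
    IsClosed (stI c d '' (D ∩ Icc c d)) := by
  obtain ⟨F, rfl⟩ := hD
  induction c using Germ.inductionOn with | h f => ?_
  induction d using Germ.inductionOn with | h g => ?_
  refine isClosed_of_closure_subset fun t ht => ?_
  -- `S m` is the internal set of points of `D ∩ [c, d]` at relative distance `≤ 1/(m+1)` from `t`.
  let S (m i : ℕ) : Set ℕ := {a | a ∈ F i ∧ f i ≤ a ∧ a ≤ g i ∧
    |((a : ℝ) - f i) / ((g i : ℝ) - f i) - t| ≤ (m + 1 : ℝ)⁻¹}
  have hS_iff (h : ℕ → ℕ) (m : ℕ) : (∀ᶠ i in hyperfilter ℕ, h i ∈ S m i) ↔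
      (↑h ∈ {x | memF F x} ∩ Icc ↑f ↑g ∧ |relPos ↑f ↑g ↑h - t| ≤ ((m + 1 : ℝ)⁻¹ : ℝ)) := by
    simp only [S, mem_ofPred_eq, eventually_and, mem_inter_iff, mem_Icc, Germ.coe_le, and_assoc]
    exact Iff.rfl
  have hanti (i : ℕ) : Antitone fun m => S m i := fun m m' hmm' a ⟨h₁, h₂, h₃, h₄⟩ =>
    ⟨h₁, h₂, h₃, h₄.trans (by gcongr)⟩
  have hne (m : ℕ) : ∀ᶠ i in hyperfilter ℕ, (S m i).Nonempty := by
    have hδ : (0 : ℝ) < (m + 1 : ℝ)⁻¹ / 2 := by positivity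
    obtain ⟨_, ⟨x, hx, rfl⟩, hxt⟩ := Metric.mem_closure_iff.1 ht _ hδ
    induction x using Germ.inductionOn with | h h => ?_
    refine ((hS_iff h m).2 ⟨hx, ?_⟩).mono fun i hi => ⟨h i, hi⟩
    have h₁ := abs_sub_stdPart_lt (mk_relPos_nonneg hx.2) hδ
    rw [← stI_eq_stdPart] at h₁
    rw [Real.dist_eq, abs_sub_comm] at hxt
    have h₂ : |((stI ↑f ↑g ↑h : ℝ) : ℝ*) - t| < ((m + 1 : ℝ)⁻¹ / 2 : ℝ) := by
      rw [← coe_sub, ← coe_abs]; exact coe_lt_coe.2 hxt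
    calc |relPos ↑f ↑g ↑h - t|
        ≤ |relPos ↑f ↑g ↑h - stI ↑f ↑g ↑h| + |((stI ↑f ↑g ↑h : ℝ) : ℝ*) - t| := abs_sub_le _ _ _
      _ ≤ ((m + 1 : ℝ)⁻¹ : ℝ) := by push_cast at h₁ h₂ ⊢; linarith
  obtain ⟨h, hh⟩ := exists_forall_eventually_mem hyperfilter_le_cofinite hanti hne
  refine ⟨↑h, ((hS_iff h 0).1 (hh 0)).1, ?_⟩
  rw [stI_eq_stdPart]
  refine stdPart_eq_of_forall_abs_sub_lt fun δ hδ => ?_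
  obtain ⟨m, hm⟩ := exists_nat_one_div_lt hδ
  refine ((hS_iff h m).1 (hh m)).2.trans_lt ?_
  rw [one_div] at hm
  exact_mod_cast hm

lemma exists_Icc_subset_volume_inter_Ioo_ne_zero {U S : Set ℝ} (hU : IsOpen U) (hSU : S ⊆ U)
    (hS : volume S ≠ 0) : ∃ a b : ℝ, a < b ∧ Icc a b ⊆ U ∧ volume (S ∩ Ioo a b) ≠ 0 := by
  by_contra! h
  let Q : Set (ℚ × ℚ) := {q | (q.1 : ℝ) < q.2 ∧ Icc (q.1 : ℝ) q.2 ⊆ U}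
  refine hS (measure_mono_null (fun t ht => ?_)
    ((measure_biUnion_null_iff Q.to_countable).2 fun q hq => h _ _ hq.1 hq.2))
  obtain ⟨e, he, hball⟩ := Metric.isOpen_iff.1 hU t (hSU ht)
  obtain ⟨a, hta, hat⟩ := exists_rat_btwn (sub_lt_self t he)
  obtain ⟨b, htb, hbt⟩ := exists_rat_btwn (lt_add_of_pos_right t he)
  refine mem_biUnion (x := (a, b)) ⟨hat.trans htb, fun s hs => hball ?_⟩ ⟨ht, hat, htb⟩
  rw [Real.ball_eq_Ioo]
  exact ⟨hta.trans_le hs.1, hs.2.trans_lt hbt⟩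

lemma exists_subinterval_lam_pos_inter_eq_empty {A B : Set SN} (hB : InternalSet B) {p q : SN}
    (hpq : InfInterval p q)
    (h : volume (stI p q '' (A ∩ Icc p q) \ stI p q '' (B ∩ Icc p q)) ≠ 0) :
    ∃ a b, p ≤ a ∧ b ≤ q ∧ InfInterval a b ∧ 0 < lam A a b ∧ B ∩ Icc a b = ∅ := by
  set E := stI p q '' (A ∩ Icc p q)
  set F := stI p q '' (B ∩ Icc p q)
  have hS : volume ((E \ F) ∩ Ioo 0 1) ≠ 0 := by
    refine fun h0 => h ?_
    rw [← measure_sdiff_null ((toFinite {(0 : ℝ), 1}).measure_zero volume)]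
    refine measure_mono_null ?_ h0
    intro t ht
    refine ⟨ht.1, ?_⟩
    rw [← Icc_sdiff_both]
    exact ⟨stI_image_subset_Icc A p q ht.1.1, ht.2⟩
  obtain ⟨α, β, hαβ, hsub, hvol⟩ := exists_Icc_subset_volume_inter_Ioo_ne_zero
    ((isClosed_stI_image hB p q).isOpen_compl.inter isOpen_Ioo)
    (fun t ht => ⟨ht.1.2, ht.2⟩) hS
  obtain ⟨a, ha, rfl⟩ := exists_mem_Icc_stI_eq hpq
    (Ioo_subset_Icc_self (hsub (left_mem_Icc.2 hαβ.le)).2)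
  obtain ⟨b, hb, rfl⟩ := exists_mem_Icc_stI_eq hpq
    (Ioo_subset_Icc_self (hsub (right_mem_Icc.2 hαβ.le)).2)
  have hab := infInterval_of_stI_lt hpq ha hb hαβ
  have hst (x : SN) (hx : x ∈ Icc a b) := stI_eq_add_mul_stI hpq.lt ha hb hab.lt hx
  refine ⟨a, b, ha.1, hb.2, hab, lam_pos_iff.2 fun h0 => hvol ?_, ?_⟩
  · refine measure_mono_null ?_ (addHaar_image_eq_zero_of_differentiableOn_of_addHaar_eq_zero
      volume (f := fun s => stI p q a + (stI p q b - stI p q a) * s) (by fun_prop) h0)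
    rintro _ ⟨⟨⟨⟨x, ⟨hxA, hx⟩, rfl⟩, -⟩, -⟩, hxab⟩
    have hx' := mem_Icc_of_stI_mem_Ioo ha hb hx hxab
    exact ⟨stI a b x, ⟨x, ⟨hxA, hx'⟩, rfl⟩, (hst x hx').symm⟩
  · refine eq_empty_of_forall_notMem fun x ⟨hxB, hx⟩ =>
      (hsub ?_).1 ⟨x, ⟨hxB, ha.1.trans hx.1, hx.2.trans hb.2⟩, rfl⟩
    have := stI_mem_Icc hx
    rw [hst x hx]
    constructor <;> nlinarith [this.1, this.2]

lemma enhancedIMOn_or_exists_subinterval_inter_eq_empty {A B : Set SN} (hB : InternalSet B)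
    (hBA : B ⊆ A) {u v : SN} (huv : InfInterval u v) (hIM : IMOn A u v) (hlam : 0 < lam A u v) :
    EnhancedIMOn B u v ∨
      ∃ a b, u ≤ a ∧ b ≤ v ∧ InfInterval a b ∧ 0 < lam A a b ∧ B ∩ Icc a b = ∅ := by
  by_cases h : ∀ p q, u ≤ p → q ≤ v → InfInterval p q →
      volume (stI p q '' (A ∩ Icc p q) \ stI p q '' (B ∩ Icc p q)) = 0
  · have hle p q (hp : u ≤ p) (hq : q ≤ v) (hpq : InfInterval p q) : lam A p q ≤ lam B p q :=
      lam_le_lam_of_volume_diff_eq_zero (h p q hp hq hpq)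
    exact Or.inl ⟨hIM.of_subset hBA hle, hlam.trans_le (hle u v le_rfl le_rfl huv)⟩
  · push Not at h
    obtain ⟨p, q, hup, hqv, hpq, hvol⟩ := h
    obtain ⟨a, b, hpa, hbq, hab, hlamab, hB⟩ :=
      exists_subinterval_lam_pos_inter_eq_empty hB hpq hvol
    exact Or.inr ⟨a, b, hup.trans hpa, hbq.trans hqv, hab, hlamab, hB⟩

lemma exists_subinterval_lam_pos_forall_inter_eq_empty {A : Set SN} {y z : SN}
    (hI : InfInterval y z) (hIM : EnhancedIMOn A y z) {B : ℕ → Set SN} {m : ℕ}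
    (hB : ∀ i < m, InternalSet (B i)) (hBA : ∀ i < m, B i ⊆ A)
    (hnot : ∀ i < m, ∀ c d, y ≤ c → d ≤ z → InfInterval c d → ¬ EnhancedIMOn (B i) c d) :
    ∃ u v, y ≤ u ∧ v ≤ z ∧ InfInterval u v ∧ 0 < lam A u v ∧ ∀ j < m, B j ∩ Icc u v = ∅ := by
  induction m with
  | zero => exact ⟨y, z, le_rfl, le_rfl, hI, hIM.2, by simp⟩
  | succ m ih =>
    obtain ⟨u, v, hyu, hvz, huv, hlam, hdisj⟩ := ih (fun i hi => hB i (by omega))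
      (fun i hi => hBA i (by omega)) (fun i hi => hnot i (by omega))
    obtain henh | ⟨a, b, hua, hbv, hab, hlamab, hBm⟩ :=
      enhancedIMOn_or_exists_subinterval_inter_eq_empty (hB m m.lt_succ_self)
        (hBA m m.lt_succ_self) huv (hIM.1.mono hyu hvz) hlam
    · exact absurd henh (hnot m m.lt_succ_self u v hyu hvz huv)
    refine ⟨a, b, hyu.trans hua, hbv.trans hvz, hab, hlamab, fun j hj => ?_⟩
    obtain hj | rfl := Nat.lt_succ_iff_lt_or_eq.1 hj
    · exact eq_empty_of_subset_empty
        (hdisj j hj ▸ inter_subset_inter_right _ (Icc_subset_Icc hua hbv))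
    · exact hBm

theorem stmt_2_general (A : Set SN) (y z : SN) (hI : InfInterval y z)
    (hIM : EnhancedIMOn A y z) (n : ℕ) (B : ℕ → Set SN) (hB : ∀ i < n, InternalSet (B i))
    (hU : A ∩ Set.Icc y z = ⋃ i ∈ Finset.range n, B i) :
    ∃ i < n, ∃ c d : SN, y ≤ c ∧ c ≤ d ∧ d ≤ z ∧ InfInterval c d ∧ EnhancedIMOn (B i) c d := by
  by_contra! hnone
  have hBA (i : ℕ) (hi : i < n) : B i ⊆ A := fun x hx =>
    (hU ▸ mem_biUnion (Finset.mem_range.2 hi) hx : x ∈ A ∩ Icc y z).1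
  obtain ⟨u, v, hyu, hvz, -, hlam, hdisj⟩ := exists_subinterval_lam_pos_forall_inter_eq_empty hI hIM
    hB hBA fun i hi c d hyc hdz hcd => hnone i hi c d hyc hcd.lt.le hdz hcd
  have hA : A ∩ Icc u v = ∅ := eq_empty_of_forall_notMem fun x ⟨hxA, hx⟩ => by
    have hxU : x ∈ A ∩ Icc y z := ⟨hxA, hyu.trans hx.1, hx.2.trans hvz⟩
    rw [hU] at hxU
    obtain ⟨i, hi, hxi⟩ := mem_iUnion₂.1 hxU
    exact (hdisj i (Finset.mem_range.1 hi)).subset ⟨hxi, hx⟩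
  simp [lam, hA] at hlam

theorem stmt_2 (A : Set SN) (y z : SN) (hA : InternalSet A) (hI : InfInterval y z)
    (hIM : EnhancedIMOn A y z) (n : ℕ) (B : ℕ → Set SN) (hB : ∀ i < n, InternalSet (B i))
    (hU : A ∩ Set.Icc y z = ⋃ i ∈ Finset.range n, B i) :
    ∃ i < n, ∃ c d : SN, y ≤ c ∧ c ≤ d ∧ d ≤ z ∧ InfInterval c d ∧ EnhancedIMOn (B i) c d :=
  stmt_2_general A y z hI hIM n B hB hU
end

section
/- The supra-SIM property is translation invariant: if A ⊆ ℕ is supra-SIM and i ∈ ℕ, then A + i and (A − i) ∩ ℕ are supra-SIM. -/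
open Filter Set MeasureTheory

/-!
Translating by `t` sends a sub-interval `[c, d]` to `[c + t, d + t]` without changing any ratio
`(x - c) / (d - c)`, so `lam` and `gap` are translation invariant and the IM property passes between
a set and its translate on translated intervals. For `A + k` this misses the intervals starting
below `k`. But moving the left endpoint of an infinite interval by a standard amount changes every
ratio only infinitesimally: it leaves `lam` unchanged and at most doubles `gap`, so the IM property
survives it.
-/

open ArchimedeanClass

lemma zero_lt_mk_of_le_natCast_div {K : Type*} [Field K] [LinearOrder K] [IsStrictOrderedRing K]
    {e D : K} (k : ℕ) (he : 0 ≤ e) (heD : e ≤ k / D) (hD : ∀ n : ℕ, (n : K) < D) :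
    0 < mk e := by
  rw [← mk_one, mk_lt_mk]
  intro n
  have hD0 : 0 < D := (Nat.cast_nonneg 0).trans_lt (hD 0)
  rw [abs_of_nonneg he, abs_one, nsmul_eq_mul]
  calc (n : K) * e ≤ n * (k / D) := by gcongr
    _ = (n * k : ℕ) / D := by push_cast; ring
    _ < 1 := (div_lt_one hD0).2 (hD _)

lemma toR_add (x y : SN) : toR (x + y) = toR x + toR y := by
  induction x using Filter.Germ.inductionOn
  induction y using Filter.Germ.inductionOn
  exact congrArg _ (funext fun n => Nat.cast_add _ _)

lemma toR_natCast (n : ℕ) : toR n = n := rfl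

lemma toR_mono : Monotone toR := fun x y h => by
  induction x using Filter.Germ.inductionOn
  induction y using Filter.Germ.inductionOn
  exact Filter.Germ.coe_le.2 ((Filter.Germ.coe_le.1 h).mono fun n hn => Nat.cast_le.2 hn)

lemma toR_sub_le_of_le_add {a b : SN} {k : ℕ} (h : b ≤ a + k) : toR b - toR a ≤ k := by
  have := toR_mono h
  rw [toR_add, toR_natCast] at this
  linarith

namespace InfInterval

variable {y z : SN}

lemma natCast_lt_toR_sub (h : InfInterval y z) (n : ℕ) : (n : ℝ*) < toR z - toR y := by
  have := toR_mono (h (n + 1)).le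
  rw [toR_add, toR_natCast, Nat.cast_succ] at this
  linarith

lemma toR_sub_pos (h : InfInterval y z) : 0 < toR z - toR y :=
  (Nat.cast_nonneg 0).trans_lt (h.natCast_lt_toR_sub 0)

lemma add_right_iff {t : SN} : InfInterval (y + t) (z + t) ↔ InfInterval y z := by
  refine forall_congr' fun n => ?_
  rw [add_right_comm, add_lt_add_iff_right]

lemma of_le_add {y' : SN} {k : ℕ} (h : InfInterval y z) (h' : y' ≤ y + k) :
    InfInterval y' z := fun n =>
  calc y' + n ≤ y + k + n := by gcongr
    _ = y + ((k + n : ℕ) : SN) := by push_cast; ring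
    _ < z := h (k + n)

end InfInterval

set_option linter.deprecated false in
lemma stI_eq_stdPart_s14 (y z x : SN) :
    stI y z x = stdPart ((toR x - toR y) / (toR z - toR y)) :=
  Hyperreal.st_eq _

lemma stI_add_right (y z x t : SN) : stI (y + t) (z + t) (x + t) = stI y z x := by
  simp only [stI_eq_stdPart_s14, toR_add, add_sub_add_right_eq_sub]

def gapSet (A : Set SN) (y z : SN) : Set ℝ :=
  {r : ℝ | 0 ≤ r ∧ ∃ c d : SN, c ∈ Icc y z ∧ d ∈ Icc y z ∧ c ≤ d ∧
    Icc c d ∩ A = ∅ ∧ (r : ℝ*) ≤ (toR d - toR c) / (toR z - toR y)}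

lemma gap_eq_sSup_gapSet (A : Set SN) (y z : SN) : gap A y z = sSup (gapSet A y z) := rfl

lemma gap_nonneg (A : Set SN) (y z : SN) : 0 ≤ gap A y z :=
  Real.sSup_nonneg fun _ hr => hr.1

lemma bddAbove_gapSet (A : Set SN) {y z : SN} (hyz : InfInterval y z) :
    BddAbove (gapSet A y z) := by
  refine ⟨1, fun r ⟨_, c, d, hc, hd, _, _, hr⟩ => ?_⟩
  have hr1 : (r : ℝ*) ≤ 1 :=
    hr.trans ((div_le_one hyz.toR_sub_pos).2 (by linarith [toR_mono hd.2, toR_mono hc.1]))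
  exact_mod_cast hr1

section LeftEndpoint

variable {y y' z : SN} {k : ℕ}

lemma stI_eq_zero_of_le_add (hyz : InfInterval y z) {x : SN} (hx : y ≤ x) (hxk : x ≤ y + k) :
    stI y z x = 0 := by
  rw [stI_eq_stdPart_s14, stdPart_eq_zero]
  refine (zero_lt_mk_of_le_natCast_div k ?_ ?_ hyz.natCast_lt_toR_sub).ne'
  · exact div_nonneg (sub_nonneg.2 (toR_mono hx)) hyz.toR_sub_pos.le
  · exact div_le_div_of_nonneg_right (toR_sub_le_of_le_add hxk) hyz.toR_sub_pos.le

lemma stI_eq_of_le_add (hyz : InfInterval y z) (h₁ : y ≤ y') (h₂ : y' ≤ y + k) {x : SN}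
    (hx : y' ≤ x) (hxz : x ≤ z) : stI y z x = stI y' z x := by
  have hD := hyz.natCast_lt_toR_sub
  set D := toR z - toR y
  set u := toR y' - toR y
  set q := (toR x - toR y') / (toR z - toR y')
  have hu : u ≤ k := toR_sub_le_of_le_add h₂
  have hu0 : 0 ≤ u := sub_nonneg.2 (toR_mono h₁)
  have hD0 : 0 < D := hyz.toR_sub_pos
  have hD'0 : 0 < toR z - toR y' := by linarith [hD k]
  have hq0 : 0 ≤ q := div_nonneg (sub_nonneg.2 (toR_mono hx)) hD'0.le
  have hq1 : q ≤ 1 := (div_le_one hD'0).2 (by linarith [toR_mono hxz])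
  have key : (toR x - toR y) / D = q + u / D * (1 - q) := by
    have hD'ne : toR z - toR y' ≠ 0 := hD'0.ne'
    have hDne : toR z - toR y ≠ 0 := hD0.ne'
    simp only [q, D, u]
    field_simp
    ring
  have he : u / D * (1 - q) ≤ k / D :=
    calc u / D * (1 - q) ≤ u / D := mul_le_of_le_one_right (by positivity) (by linarith)
      _ ≤ k / D := div_le_div_of_nonneg_right hu hD0.le
  rw [stI_eq_stdPart_s14, stI_eq_stdPart_s14, key, stdPart_add_eq_left]
  exact zero_lt_mk_of_le_natCast_div k (mul_nonneg (by positivity) (by linarith)) he hD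

lemma lam_eq_of_le_add (S : Set SN) (hyz : InfInterval y z) (h₁ : y ≤ y') (h₂ : y' ≤ y + k) :
    lam S y z = lam S y' z := by
  unfold lam
  congr 1
  refine le_antisymm ?_ (measure_mono ?_)
  · have hsub : stI y z '' (S ∩ Icc y z) ⊆ stI y' z '' (S ∩ Icc y' z) ∪ {0} := by
      rintro _ ⟨x, ⟨hxS, hyx, hxz⟩, rfl⟩
      by_cases hx : y' ≤ x
      · exact Or.inl ⟨x, ⟨hxS, hx, hxz⟩, (stI_eq_of_le_add hyz h₁ h₂ hx hxz).symm⟩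
      · exact Or.inr (stI_eq_zero_of_le_add hyz hyx ((not_le.1 hx).le.trans h₂))
    calc volume (stI y z '' (S ∩ Icc y z))
        ≤ volume (stI y' z '' (S ∩ Icc y' z)) + volume ({0} : Set ℝ) :=
          (measure_mono hsub).trans (measure_union_le _ _)
      _ = volume (stI y' z '' (S ∩ Icc y' z)) := by rw [Real.volume_singleton, add_zero]
  · rintro _ ⟨x, ⟨hxS, hyx, hxz⟩, rfl⟩
    exact ⟨x, ⟨hxS, h₁.trans hyx, hxz⟩, stI_eq_of_le_add hyz h₁ h₂ hyx hxz⟩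

lemma gap_le_two_mul_of_le_add (S : Set SN) (hyz : InfInterval y z) (h₁ : y ≤ y')
    (h₂ : y' ≤ y + k) : gap S y' z ≤ 2 * gap S y z := by
  have hD0 := hyz.toR_sub_pos
  have hDD' : toR z - toR y ≤ 2 * (toR z - toR y') := by
    have := hyz.natCast_lt_toR_sub (2 * k)
    push_cast at this
    linarith [toR_sub_le_of_le_add h₂]
  refine Real.sSup_le (fun r ⟨hr0, c, d, hc, hd, hcd, hgap, hr⟩ => ?_)
    (mul_nonneg zero_le_two (gap_nonneg S y z))
  have hhalf : r / 2 ∈ gapSet S y z := by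
    refine ⟨by positivity, c, d, ⟨h₁.trans hc.1, hc.2⟩, ⟨h₁.trans hd.1, hd.2⟩, hcd, hgap, ?_⟩
    rw [le_div_iff₀ hD0]
    rw [le_div_iff₀ (by linarith)] at hr
    have hr0' : (0 : ℝ*) ≤ r := by exact_mod_cast hr0
    push_cast
    nlinarith
  linarith [le_csSup (bddAbove_gapSet S hyz) hhalf, gap_eq_sSup_gapSet S y z]

end LeftEndpoint

section Translation

variable {y z : SN} (A : Set SN) (t : SN)

lemma Icc_add_inter_eq_image (c d : SN) :
    Icc (c + t) (d + t) ∩ A = (· + t) '' (Icc c d ∩ ((· + t) ⁻¹' A)) := by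
  rw [← image_add_const_Icc, ← image_inter_preimage]

lemma lam_preimage_add : lam ((· + t) ⁻¹' A) y z = lam A (y + t) (z + t) := by
  simp only [lam, inter_comm _ (Icc _ _), Icc_add_inter_eq_image, image_image, stI_add_right]

lemma gapSet_preimage_add : gapSet ((· + t) ⁻¹' A) y z = gapSet A (y + t) (z + t) := by
  have hgap (c d : SN) : Icc (c + t) (d + t) ∩ A = ∅ ↔ Icc c d ∩ ((· + t) ⁻¹' A) = ∅ := by
    rw [Icc_add_inter_eq_image, image_eq_empty]
  have hratio (c d : SN) : (toR (d + t) - toR (c + t)) / (toR (z + t) - toR (y + t)) =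
      (toR d - toR c) / (toR z - toR y) := by
    simp only [toR_add, add_sub_add_right_eq_sub]
  ext r
  refine and_congr_right fun _ =>
    ⟨fun ⟨c, d, hc, hd, hcd, hg, hr⟩ => ?_, fun ⟨c, d, hc, hd, hcd, hg, hr⟩ => ?_⟩
  · rw [← image_add_const_Icc]
    exact ⟨c + t, d + t, mem_image_of_mem _ hc, mem_image_of_mem _ hd, by gcongr, (hgap c d).2 hg,
      (hratio c d).symm ▸ hr⟩
  · rw [← image_add_const_Icc] at hc hd
    obtain ⟨c, hc, rfl⟩ := hc
    obtain ⟨d, hd, rfl⟩ := hd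
    exact ⟨c, d, hc, hd, (add_le_add_iff_right t).1 hcd, (hgap c d).1 hg, hratio c d ▸ hr⟩

lemma gap_preimage_add : gap ((· + t) ⁻¹' A) y z = gap A (y + t) (z + t) :=
  congrArg sSup (gapSet_preimage_add A t)

lemma forall_le_add_right_iff {P : SN → SN → Prop} :
    (∀ c d, y + t ≤ c → c ≤ d → d ≤ z + t → P c d) ↔
      ∀ c d, y ≤ c → c ≤ d → d ≤ z → P (c + t) (d + t) := by
  refine ⟨fun h c d hc hcd hd => h _ _ (by gcongr) (by gcongr) (by gcongr),
    fun h c d hc hcd hd => ?_⟩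
  obtain ⟨c, rfl⟩ := le_iff_exists_add'.1 (le_add_self.trans hc)
  obtain ⟨d, rfl⟩ := le_iff_exists_add'.1 (le_add_self.trans (hc.trans hcd))
  simp only [add_le_add_iff_right] at hc hcd hd
  exact h c d hc hcd hd

lemma IMOn_preimage_add_iff : IMOn ((· + t) ⁻¹' A) y z ↔ IMOn A (y + t) (z + t) := by
  refine forall₂_congr fun ε _ => exists_congr fun δ => and_congr_right fun _ => ?_
  rw [forall_le_add_right_iff]
  simp only [InfInterval.add_right_iff, lam_preimage_add, gap_preimage_add]

lemma lam_image_add : lam ((· + t) '' A) (y + t) (z + t) = lam A y z := by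
  rw [← lam_preimage_add, (add_left_injective t).preimage_image]

end Translation

namespace IMOn

variable {S : Set SN} {y z : SN}

lemma image_add (h : IMOn S y z) (t : SN) : IMOn ((· + t) '' S) (y + t) (z + t) := by
  rwa [← IMOn_preimage_add_iff, (add_left_injective t).preimage_image]

lemma mono_right {z' : SN} (h : IMOn S y z) (hz : z' ≤ z) : IMOn S y z' :=
  fun ε hε => (h ε hε).imp fun _ ⟨hδ, hcd⟩ =>
    ⟨hδ, fun c d hc hcd' hd => hcd c d hc hcd' (hd.trans hz)⟩

lemma of_le_add {y' : SN} {k : ℕ} (h : IMOn S y' z) (hy' : y' ≤ y + k) : IMOn S y z := by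
  intro ε hε
  obtain ⟨δ, hδ, hIM⟩ := h ε hε
  refine ⟨δ / 2, half_pos hδ, fun c d hc hcd hd hinf hgap => ?_⟩
  by_cases hc' : y' ≤ c
  · exact hIM c d hc' hcd hd hinf (by linarith [gap_nonneg S c d])
  have h₁ : c ≤ y' := (not_le.1 hc').le
  have h₂ : y' ≤ c + k := hy'.trans (by gcongr)
  rw [lam_eq_of_le_add S hinf h₁ h₂]
  exact hIM y' d le_rfl (h₂.trans (hinf k).le) hd (hinf.of_le_add h₂)
    (by linarith [gap_le_two_mul_of_le_add S hinf h₁ h₂])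

end IMOn

lemma starN_preimage (f : ℕ → ℕ) (B : Set ℕ) :
    starN (f ⁻¹' B) = Filter.Germ.map f ⁻¹' starN B := by
  ext x
  induction x using Filter.Germ.inductionOn
  rfl

lemma starN_image (f : ℕ → ℕ) (B : Set ℕ) : starN (f '' B) = Filter.Germ.map f '' starN B := by
  ext x
  induction x using Filter.Germ.inductionOn with
  | h g =>
    refine ⟨fun hg => ⟨↑(fun n => Function.invFunOn f B (g n)), ?_, ?_⟩, ?_⟩
    · exact hg.mono fun n hn => Function.invFunOn_mem hn
    · exact Filter.Germ.coe_eq.2 (hg.mono fun n hn => Function.invFunOn_eq hn)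
    · rintro ⟨x, hx, hxg⟩
      induction x using Filter.Germ.inductionOn
      rw [← hxg]
      exact hx.mono fun n hn => mem_image_of_mem f hn

lemma germ_map_add_natCast (k : ℕ) : Filter.Germ.map (· + k) = fun x : SN => x + k := by
  ext x
  induction x using Filter.Germ.inductionOn
  rfl

namespace SIM

variable {B : Set ℕ}

lemma image_add (hB : SIM B) (k : ℕ) : SIM ((· + k) '' B) := by
  obtain ⟨hIM, y, z, hyz, hIMyz, hlam⟩ := hB
  rw [SIM, starN_image, germ_map_add_natCast]
  refine ⟨fun y z hyz => ?_, y + k, z + k, InfInterval.add_right_iff.2 hyz, hIMyz.image_add k,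
    by rwa [lam_image_add]⟩
  exact (((hIM y z hyz).image_add k).of_le_add le_rfl).mono_right le_self_add

lemma preimage_add (hB : SIM B) (k : ℕ) : SIM {n | n + k ∈ B} := by
  obtain ⟨hIM, y, z, hyz, -, hlam⟩ := hB
  change SIM ((· + k) ⁻¹' B)
  rw [SIM, starN_preimage, germ_map_add_natCast]
  have hIM' (y z : SN) (hyz : InfInterval y z) : IMOn ((· + k) ⁻¹' starN B) y z :=
    (IMOn_preimage_add_iff _ _).2 (hIM _ _ (InfInterval.add_right_iff.2 hyz))
  obtain ⟨w, rfl⟩ := le_iff_exists_add'.1 (le_add_self.trans (hyz k).le)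
  have hyw : InfInterval y w := InfInterval.add_right_iff.1 (hyz.of_le_add le_rfl)
  refine ⟨hIM', y, w, hyw, hIM' y w hyw, ?_⟩
  rwa [lam_preimage_add, ← lam_eq_of_le_add _ hyz le_self_add le_rfl]

end SIM

theorem stmt_14 (A : Set ℕ) (hA : SupraSIM A) (i : ℕ) :
    SupraSIM ((· + i) '' A) ∧ SupraSIM {n : ℕ | n + i ∈ A} := by
  obtain ⟨B, hBA, hB⟩ := hA
  exact ⟨⟨_, image_mono hBA, hB.image_add i⟩, ⟨_, fun _ hn => hBA hn, hB.preimage_add i⟩⟩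
end
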